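/- For any nonzero integer a and any integer n ≥ 2, E_{2n,a} ≡ a·(2a-1)^{-1} + 8a^3 n^3 + 12a^3 n^2 + (2a^3 + 8a^2) n (mod 32), where (2a-1)^{-1} denotes the inverse of 2a-1 modulo 32. -/

import Mathlib

open Finset

def EZ (a : ℤ) : ℕ → ℤ
  | 0 => 1
  | n + 1 =>
      -a * ∑ k ∈ (Finset.Icc 1 ((n + 1) / 2)).attach,
        ((n + 1).choose (2 * k.1) : ℤ) * EZ a (n + 1 - 2 * k.1)
  decreasing_by
    have h := Finset.mem_Icc.mp k.2
    omega

/-!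
At even indices the recursion reads `E_{2n} = -a ∑_{m<n} C(2n,2m) E_{2m}`. The claimed residue
`F(m)` is a cubic in `m` whose expansion in the basis `C(2m, r)`, `r ≤ 3`, has integral
coefficients, and evaluating `∑ᵢ C(N,i) C(i,r) xⁱ = C(N,r) xʳ (1+x)^(N-r)` at `x = ±1` gives
`∑_{m≤n} C(2n,2m) C(2m,r) = C(2n,r) 2^(2n-r-1)`. Hence `∑_{m≤n} C(2n,2m) F(m) ≡ 0 (mod 32)` as soon
as `n ≥ 5`, and strong induction on `n` leaves only the corrections at `m = 0, 1, n`: a congruence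
in `a` and `n` alone. The cases `n = 2, 3, 4` are computed directly.
-/

theorem sum_choose_mul_choose_mul_pow {R : Type*} [CommRing R] (x : R) {N r : ℕ} (h : r ≤ N) :
    ∑ i ∈ range (N + 1), (N.choose i * i.choose r : R) * x ^ i
      = N.choose r * x ^ r * (1 + x) ^ (N - r) := by
  rw [show N + 1 = r + (N - r + 1) by omega, sum_range_add, add_comm 1 x, add_pow, mul_sum]
  rw [sum_eq_zero fun i hi => by simp [Nat.choose_eq_zero_of_lt (mem_range.mp hi)], zero_add]
  refine sum_congr rfl fun j hj => ?_
  rw [← Nat.cast_mul, Nat.choose_mul (by omega), Nat.add_sub_cancel_left]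
  push_cast
  ring

theorem Finset.sum_range_two_mul_add_one {M : Type*} [AddCommMonoid M] (f : ℕ → M) (n : ℕ) :
    ∑ i ∈ range (2 * n + 1), f i
      = ∑ m ∈ range (n + 1), f (2 * m) + ∑ m ∈ range n, f (2 * m + 1) := by
  induction n with
  | zero => simp
  | succ n ih =>
    rw [show 2 * (n + 1) + 1 = 2 * n + 1 + 1 + 1 by ring, sum_range_succ, sum_range_succ, ih]
    simp only [sum_range_succ _ (n + 1), sum_range_succ _ n, mul_add, mul_one]
    abel

theorem two_mul_sum_choose_two_mul_mul_choose {n r : ℕ} (h : r < 2 * n) :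
    2 * ∑ m ∈ range (n + 1), ((2 * n).choose (2 * m) * (2 * m).choose r : ℤ)
      = (2 * n).choose r * 2 ^ (2 * n - r) := by
  have hplus := sum_choose_mul_choose_mul_pow (1 : ℤ) h.le
  have hminus := sum_choose_mul_choose_mul_pow (-1 : ℤ) h.le
  rw [add_neg_cancel, zero_pow (by omega), mul_zero] at hminus
  calc 2 * ∑ m ∈ range (n + 1), ((2 * n).choose (2 * m) * (2 * m).choose r : ℤ)
      = ∑ i ∈ range (2 * n + 1), ((2 * n).choose i * i.choose r : ℤ) * (1 ^ i + (-1) ^ i) := by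
        rw [sum_range_two_mul_add_one, mul_sum]
        simp [pow_succ, pow_mul, one_add_one_eq_two, mul_comm _ (2 : ℤ)]
    _ = (2 * n).choose r * 2 ^ (2 * n - r) := by
        rw [← zero_add ((2 * n).choose r * 2 ^ (2 * n - r) : ℤ), ← hminus]
        simp only [mul_add, sum_add_distrib, hplus]
        norm_num [add_comm]

theorem pow_dvd_sum_choose_two_mul_mul_choose {n r k : ℕ} (h : r + k < 2 * n) :
    (2 : ℤ) ^ k ∣ ∑ m ∈ range (n + 1), ((2 * n).choose (2 * m) * (2 * m).choose r : ℤ) := by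
  have hsum := two_mul_sum_choose_two_mul_mul_choose (show r < 2 * n by omega)
  rw [show 2 * n - r = (2 * n - r - 1) + 1 by omega, pow_succ, mul_comm _ (2 : ℤ),
    ← mul_assoc, mul_comm _ (2 : ℤ), mul_assoc] at hsum
  rw [mul_left_cancel₀ two_ne_zero hsum, show 2 * n - r - 1 = (2 * n - r - 1 - k) + k by omega,
    pow_add]
  exact (dvd_mul_left _ _).mul_left _

theorem cast_choose_two_mul_two {R : Type*} [CommRing R] (n : ℕ) :
    ((2 * n).choose 2 : R) = n * (2 * n - 1) := by
  rcases n with _ | n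
  · simp
  rw [Nat.choose_two_right, mul_assoc, Nat.mul_div_cancel_left _ two_pos, Nat.cast_mul,
    Nat.cast_sub (by omega)]
  push_cast
  ring

theorem six_mul_cast_choose_three {R : Type*} [CommRing R] (n : ℕ) :
    6 * (n.choose 3 : R) = n * (n - 1) * (n - 2) := by
  have h := descPochhammer_eval_eq_descFactorial R n 3
  rw [Nat.descFactorial_eq_factorial_mul_choose] at h
  simp [descPochhammer_succ_right, Nat.factorial] at h
  linear_combination -h

theorem EZ_zero (a : ℤ) : EZ a 0 = 1 := by simp [EZ]

theorem EZ_succ (a : ℤ) (n : ℕ) : EZ a (n + 1) =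
    -a * ∑ k ∈ Icc 1 ((n + 1) / 2), ((n + 1).choose (2 * k) : ℤ) * EZ a (n + 1 - 2 * k) := by
  rw [EZ, sum_attach _ fun k => ((n + 1).choose (2 * k) : ℤ) * EZ a (n + 1 - 2 * k)]

theorem EZ_two_mul_succ (a : ℤ) (n : ℕ) : EZ a (2 * (n + 1)) =
    -a * ∑ m ∈ range (n + 1), ((2 * (n + 1)).choose (2 * m) : ℤ) * EZ a (2 * m) := by
  rw [show 2 * (n + 1) = 2 * n + 1 + 1 by ring, EZ_succ, show (2 * n + 1 + 1) / 2 = n + 1 by omega,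
    ← Finset.Ico_add_one_right_eq_Icc, sum_Ico_eq_sum_range, ← sum_range_reflect]
  refine congrArg _ (sum_congr rfl fun m hm => ?_)
  have hm := mem_range.mp hm
  rw [← Nat.choose_symm (by omega)]
  congr 3 <;> omega

theorem EZ_two (a : ℤ) : EZ a 2 = -a := by
  simpa [EZ_zero] using EZ_two_mul_succ a 0

theorem EZ_four (a : ℤ) : EZ a 4 = 6 * a ^ 2 - a := by
  have h := EZ_two_mul_succ a 1
  norm_num [sum_range_succ, EZ_zero, EZ_two, Nat.choose] at h
  linear_combination h

theorem EZ_six (a : ℤ) : EZ a 6 = -90 * a ^ 3 + 30 * a ^ 2 - a := by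
  have h := EZ_two_mul_succ a 2
  norm_num [sum_range_succ, EZ_zero, EZ_two, EZ_four, Nat.choose] at h
  linear_combination h

theorem EZ_eight (a : ℤ) : EZ a 8 = 2520 * a ^ 4 - 1260 * a ^ 3 + 126 * a ^ 2 - a := by
  have h := EZ_two_mul_succ a 3
  norm_num [sum_range_succ, EZ_zero, EZ_two, EZ_four, EZ_six, Nat.choose] at h
  linear_combination h

/-- A truncated geometric series: `(1 - 2A)(1 + 2A + ⋯ + 16A⁴) = 1 - 32A⁵`. -/
def oddInv (A : ZMod 32) : ZMod 32 := -(1 + 2 * A + 4 * A ^ 2 + 8 * A ^ 3 + 16 * A ^ 4)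

theorem two_mul_sub_one_mul_oddInv (A : ZMod 32) : (2 * A - 1) * oddInv A = 1 := by
  have h32 : (32 : ZMod 32) = 0 := rfl
  unfold oddInv
  linear_combination (-A ^ 5) * h32

def evenClosedForm (A M : ZMod 32) : ZMod 32 :=
  A * oddInv A + 8 * A ^ 3 * M ^ 3 + 12 * A ^ 3 * M ^ 2 + (2 * A ^ 3 + 8 * A ^ 2) * M

theorem evenClosedForm_eq_choose (A : ZMod 32) (m : ℕ) :
    evenClosedForm A m = A * oddInv A * (2 * m).choose 0 + A ^ 3 * (6 * (2 * m).choose 3)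
      + 12 * A ^ 3 * (2 * m).choose 2 + (5 * A ^ 3 + 4 * A ^ 2) * (2 * m).choose 1 := by
  have h2 := cast_choose_two_mul_two (R := ZMod 32) m
  have h3 := six_mul_cast_choose_three (R := ZMod 32) (2 * m)
  simp only [Nat.choose_zero_right, Nat.choose_one_right]
  push_cast at h3 ⊢
  unfold evenClosedForm
  linear_combination (-A ^ 3) * h3 + (-12 * A ^ 3) * h2

theorem sum_choose_two_mul_mul_evenClosedForm (A : ZMod 32) {n : ℕ} (hn : 5 ≤ n) :
    ∑ m ∈ range (n + 1), ((2 * n).choose (2 * m) : ZMod 32) * evenClosedForm A m = 0 := by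
  have hS : ∀ r ≤ 3,
      ∑ m ∈ range (n + 1), ((2 * n).choose (2 * m) * (2 * m).choose r : ZMod 32) = 0 := by
    intro r hr
    have h := (ZMod.intCast_zmod_eq_zero_iff_dvd _ 32).mpr
      (by simpa using pow_dvd_sum_choose_two_mul_mul_choose (k := 5) (show r + 5 < 2 * n by omega))
    push_cast at h
    exact h
  simp only [evenClosedForm_eq_choose, mul_add, sum_add_distrib]
  simp only [mul_left_comm (Nat.cast _ : ZMod 32), ← mul_sum, hS 0 (by norm_num),
    hS 1 (by norm_num), hS 2 (by norm_num), hS 3 le_rfl, mul_zero, add_zero]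

/- The next two are congruences mod 32 that are not polynomial identities (they rest on facts
such as `2 ∣ m (m - 1)`), so they are checked on all residues. -/

theorem evenClosedForm_base (A : ZMod 32) :
    6 * A ^ 2 - A = evenClosedForm A 2 ∧ -90 * A ^ 3 + 30 * A ^ 2 - A = evenClosedForm A 3 ∧
      2520 * A ^ 4 - 1260 * A ^ 3 + 126 * A ^ 2 - A = evenClosedForm A 4 := by
  revert A
  decide

theorem evenClosedForm_step (A M : ZMod 32) :
    -A * (1 - evenClosedForm A 0 + M * (2 * M - 1) * (-A - evenClosedForm A 1)
      - evenClosedForm A M) = evenClosedForm A M := by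
  revert A M
  decide

theorem cast_EZ_two_mul_of_le_four (a : ℤ) {n : ℕ} (hn : 2 ≤ n) (hn4 : n ≤ 4) :
    (EZ a (2 * n) : ZMod 32) = evenClosedForm a n := by
  obtain ⟨h4, h6, h8⟩ := evenClosedForm_base (a : ZMod 32)
  interval_cases n
  · rw [show 2 * 2 = 4 from rfl, EZ_four]; push_cast; exact h4
  · rw [show 2 * 3 = 6 from rfl, EZ_six]; push_cast; exact h6
  · rw [show 2 * 4 = 8 from rfl, EZ_eight]; push_cast; exact h8

theorem cast_EZ_two_mul (a : ℤ) {n : ℕ} (hn : 2 ≤ n) :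
    (EZ a (2 * n) : ZMod 32) = evenClosedForm a n := by
  induction n using Nat.strong_induction_on with
  | _ n ih =>
  rcases lt_or_ge n 5 with hsmall | hlarge
  · exact cast_EZ_two_mul_of_le_four a hn (by omega)
  obtain ⟨k, rfl⟩ : ∃ k, n = k + 2 := ⟨n - 2, by omega⟩
  set A : ZMod 32 := (a : ZMod 32)
  set c : ℕ → ZMod 32 := fun m => ((2 * (k + 2)).choose (2 * m) : ℕ)
  have hrec : (EZ a (2 * (k + 2)) : ZMod 32) = -A * ∑ m ∈ range (k + 2), c m * EZ a (2 * m) := by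
    rw [EZ_two_mul_succ]
    push_cast
    rfl
  have hlow : ∑ m ∈ range (k + 2), c m * EZ a (2 * m)
      = ∑ m ∈ range (k + 2), c m * evenClosedForm A m + (1 - evenClosedForm A 0)
        + c 1 * (-A - evenClosedForm A 1) := by
    have hdiff : ∑ m ∈ range (k + 2), c m * (EZ a (2 * m) - evenClosedForm A m)
        = (1 - evenClosedForm A 0) + c 1 * (-A - evenClosedForm A 1) := by
      rw [sum_range_succ', sum_range_succ', sum_eq_zero fun j hj => by
        rw [ih (j + 2) (by simp at hj; omega) (by omega), sub_self, mul_zero]]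
      simp [c, EZ_zero, EZ_two, A]
      ring
    rw [add_assoc, ← hdiff, ← sum_add_distrib]
    exact sum_congr rfl fun m _ => by ring
  have htop : ∑ m ∈ range (k + 2), c m * evenClosedForm A m = -evenClosedForm A ↑(k + 2) := by
    have h := sum_choose_two_mul_mul_evenClosedForm A hlarge
    rw [sum_range_succ, Nat.choose_self, Nat.cast_one, one_mul] at h
    exact eq_neg_of_add_eq_zero_left h
  have hc1 : c 1 = ((k + 2 : ℕ) : ZMod 32) * (2 * ((k + 2 : ℕ) : ZMod 32) - 1) := by
    simp only [c, mul_one]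
    exact cast_choose_two_mul_two (k + 2)
  rw [hrec, hlow, htop, hc1]
  linear_combination evenClosedForm_step A ((k + 2 : ℕ) : ZMod 32)

theorem stmt17_general (a : ℤ) (n : ℕ) (hn : 2 ≤ n) :
    ∀ b : ℤ, (2 * a - 1) * b ≡ 1 [ZMOD 32] →
      EZ a (2 * n) ≡ a * b + 8 * a ^ 3 * n ^ 3 + 12 * a ^ 3 * n ^ 2 +
        (2 * a ^ 3 + 8 * a ^ 2) * n [ZMOD 32] := by
  intro b hinv
  have hb : (b : ZMod 32) = oddInv a := by
    have h := (ZMod.intCast_eq_intCast_iff _ _ _).mpr hinv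
    push_cast at h
    exact left_inv_eq_right_inv (by rw [mul_comm, h]) (two_mul_sub_one_mul_oddInv a)
  apply (ZMod.intCast_eq_intCast_iff _ _ 32).mp
  push_cast
  rw [cast_EZ_two_mul a hn, hb]
  rfl

theorem stmt17 (a : ℤ) (ha : a ≠ 0) (n : ℕ) (hn : 2 ≤ n) :
    ∀ b : ℤ, (2 * a - 1) * b ≡ 1 [ZMOD 32] →
      EZ a (2 * n) ≡ a * b + 8 * a ^ 3 * n ^ 3 + 12 * a ^ 3 * n ^ 2 +
        (2 * a ^ 3 + 8 * a ^ 2) * n [ZMOD 32] :=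
  stmt17_general a n hn
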